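/- Let R be a Noetherian domain whose integral closure R' in its fraction field K is a finite R-module, and assume that for every height-1 prime P' of R', the contraction P' ∩ R has height 1 in R. Then the hull ⋂_p R_p ⊆ K (intersection over all height-1 primes p of R) is a finite R-module. -/

import Mathlib

universe u
set_option synthInstance.maxHeartbeats 1000000
set_option maxHeartbeats 1000000

noncomputable def domainHull (R : Type u) [CommRing R] [IsDomain R] :
    Submodule R (FractionRing R) :=
  ⨅ (p : PrimeSpectrum R) (_ : Order.height p = 1),
    Subalgebra.toSubmodule (Localization.subalgebra (FractionRing R) p.asIdeal.primeCompl
      p.asIdeal.primeCompl_le_nonZeroDivisors)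

/-!
The hull lies inside `R'`, which is a Noetherian `R`-module. Suppose `x = a/b` lies in the hull
but not in `R'`. An associated prime `P` of `R'/bR'` containing `(bR' : a)` has height one: in the
normal local ring `R'_P` the maximal ideal is `(b : c)` for some `c ∉ (b)`, and this forces it to
be principal. By hypothesis `p = P ∩ R` has height one, so `x = r/s` with `s ∉ p`; but `s a = r b`
puts `s` into `(bR' : a) ⊆ P`.
-/

open IsLocalRing

theorem Ideal.mem_colon_bot_quotient_mk_iff {A : Type*} [CommRing A] {I : Ideal A} {z c : A} :
    z ∈ (⊥ : Submodule A (A ⧸ I)).colon {Ideal.Quotient.mk I c} ↔ z * c ∈ I := by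
  rw [Submodule.mem_colon_singleton, Submodule.mem_bot, Algebra.smul_def,
    Ideal.Quotient.algebraMap_eq, ← map_mul, Ideal.Quotient.eq_zero_iff_mem]

theorem IsAssociatedPrime.maximalIdeal_localizationAtPrime {A : Type*} [CommRing A]
    {P I : Ideal A} [P.IsPrime] (h : IsAssociatedPrime P (A ⧸ I)) :
    IsAssociatedPrime (maximalIdeal (Localization.AtPrime P))
      (Localization.AtPrime P ⧸ I.map (algebraMap A (Localization.AtPrime P))) := by
  have :=
    Module.associatedPrimes.mem_associatedPrimes_of_comap_mem_associatedPrimes_of_isLocalizedModule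
    P.primeCompl (I.toLocalizedQuotient' (Localization.AtPrime P) P.primeCompl
      (Algebra.linearMap A (Localization.AtPrime P))) (maximalIdeal (Localization.AtPrime P))
      (by rwa [← Ideal.under_def, Localization.AtPrime.under_maximalIdeal])
  rwa [Ideal.localized'_eq_map] at this

section IntegrallyClosed

variable {A : Type*} [CommRing A] [IsDomain A] [IsIntegrallyClosed A]

theorem IsIntegrallyClosed.dvd_of_forall_exists_mul_eq_mul {I : Ideal A} (hI : I.FG)
    (hI0 : I ≠ ⊥) {b c : A} (h : ∀ z ∈ I, ∃ w ∈ I, z * c = b * w) : b ∣ c := by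
  obtain ⟨z₀, hz₀, hz₀0⟩ := (Submodule.ne_bot_iff I).mp hI0
  rcases eq_or_ne b 0 with rfl | hb
  · obtain ⟨w, -, hzw⟩ := h z₀ hz₀
    rw [zero_mul, mul_eq_zero] at hzw
    simp [hzw.resolve_left hz₀0]
  let K := FractionRing A
  have hinj : Function.Injective (algebraMap A K) := IsFractionRing.injective A K
  have hbK : algebraMap A K b ≠ 0 := (map_ne_zero_iff _ hinj).mpr hb
  let N := Submodule.map (Algebra.linearMap A K) I
  have hN : N ≠ ⊥ :=
    (Submodule.ne_bot_iff N).mpr ⟨_, ⟨z₀, hz₀, rfl⟩, (map_ne_zero_iff _ hinj).mpr hz₀0⟩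
  have hint : IsIntegral A (algebraMap A K c / algebraMap A K b) := by
    refine isIntegral_of_smul_mem_submodule N hN (Submodule.FG.map _ hI) _ ?_
    rintro - ⟨z, hz, rfl⟩
    obtain ⟨w, hw, hzw⟩ := h z hz
    refine ⟨w, hw, ?_⟩
    simp only [Algebra.linearMap_apply, smul_eq_mul]
    rw [div_mul_eq_mul_div, eq_div_iff hbK, ← map_mul, ← map_mul, mul_comm c, hzw,
      mul_comm]
  obtain ⟨y, hy⟩ := IsIntegrallyClosed.algebraMap_eq_of_integral hint
  refine ⟨y, hinj ?_⟩
  rw [map_mul, hy, mul_div_cancel₀ _ hbK]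

variable [IsNoetherianRing A]

theorem IsLocalRing.isPrincipal_maximalIdeal_of_isAssociatedPrime [IsLocalRing A] {b : A}
    (h : IsAssociatedPrime (maximalIdeal A) (A ⧸ Ideal.span {b})) :
    (maximalIdeal A).IsPrincipal := by
  obtain ⟨-, x, hx⟩ := isAssociatedPrime_iff.mp h
  obtain ⟨c, rfl⟩ := Ideal.Quotient.mk_surjective x
  have hm (z : A) : z ∈ maximalIdeal A ↔ z * c ∈ Ideal.span {b} := by
    rw [hx, Ideal.mem_colon_bot_quotient_mk_iff]
  have hc : c ∉ Ideal.span {b} := fun hc ↦ (maximalIdeal.isMaximal A).ne_top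
    ((Ideal.eq_top_iff_one _).mpr ((hm 1).mpr (by rwa [one_mul])))
  have hc0 : c ≠ 0 := by rintro rfl; exact hc (zero_mem _)
  by_cases hbot : maximalIdeal A = ⊥
  · rw [hbot]; infer_instance
  -- Either `c/b` stabilises `m`, so it is integral and `b ∣ c`; or `z c = b w` with `z ∈ m` and
  -- `w` a unit, and then `m = (z)`.
  by_cases hstable : ∀ z ∈ maximalIdeal A, ∃ w ∈ maximalIdeal A, z * c = b * w
  · exact absurd (Ideal.mem_span_singleton.mpr <| IsIntegrallyClosed.dvd_of_forall_exists_mul_eq_mul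
      (IsNoetherian.noetherian _) hbot hstable) hc
  push Not at hstable
  obtain ⟨z, hz, hzc⟩ := hstable
  obtain ⟨w, hwb⟩ := Ideal.mem_span_singleton'.mp ((hm z).mp hz)
  have hw : IsUnit w := by
    by_contra hw
    exact hzc w ((mem_maximalIdeal w).mpr hw) (by rw [← hwb, mul_comm])
  refine ⟨⟨z, le_antisymm (fun y hy ↦ ?_) ((Ideal.span_singleton_le_iff_mem _).mpr hz)⟩⟩
  obtain ⟨v, hv⟩ := Ideal.mem_span_singleton'.mp ((hm y).mp hy)
  have hyw : y * w = v * z := mul_right_cancel₀ hc0 (by linear_combination v * hwb - w * hv)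
  exact (Ideal.mul_unit_mem_iff_mem _ hw).mp (hyw ▸ Ideal.mem_span_singleton'.mpr ⟨v, rfl⟩)

theorem IsAssociatedPrime.height_eq_one {P : Ideal A} {b : A} (hb : b ≠ 0)
    (h : IsAssociatedPrime P (A ⧸ Ideal.span {b})) : P.height = 1 := by
  have : P.IsPrime := h.isPrime
  let L := Localization.AtPrime P
  have : IsIntegrallyClosed L :=
    isIntegrallyClosed_of_isLocalization L P.primeCompl P.primeCompl_le_nonZeroDivisors
  have hL := h.maximalIdeal_localizationAtPrime
  rw [Ideal.map_span, Set.image_singleton] at hL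
  have := IsLocalRing.isPrincipal_maximalIdeal_of_isAssociatedPrime hL
  have hle : P.height ≤ 1 := by
    rw [← Localization.AtPrime.under_maximalIdeal (I := P),
      IsLocalization.height_under P.primeCompl]
    refine Ideal.height_le_one_of_isPrincipal_of_mem_minimalPrimes (maximalIdeal L) _ ?_
    rw [Ideal.minimalPrimes_eq_subsingleton_self]
    rfl
  have hbP : b ∈ P := h.annihilator_le <| by
    rw [Submodule.annihilator_top, Ideal.annihilator_quotient]
    exact Ideal.mem_span_singleton_self b
  have hP0 : P ≠ ⊥ := fun hP ↦ hb (by simpa [hP] using hbP)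
  refine le_antisymm hle (Order.one_le_iff_pos.mpr (pos_iff_ne_zero.mpr ?_))
  rwa [Ne, Ideal.height_eq_zero_iff_eq_bot]

theorem exists_isPrime_height_eq_one_of_notMem_span_singleton {a b : A} (hb : b ≠ 0)
    (ha : a ∉ Ideal.span {b}) :
    ∃ P : Ideal A, P.IsPrime ∧ P.height = 1 ∧ ∀ s, s * a ∈ Ideal.span {b} → s ∈ P := by
  obtain ⟨P, hP, hle⟩ := exists_le_isAssociatedPrime_of_isNoetherianRing A
    (Ideal.Quotient.mk (Ideal.span {b}) a) (by rwa [Ne, Ideal.Quotient.eq_zero_iff_mem])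
  exact ⟨P, hP.isPrime, hP.height_eq_one hb, fun s hs ↦
    hle (Ideal.mem_colon_bot_quotient_mk_iff.mpr hs)⟩

end IntegrallyClosed

theorem exists_mul_eq_algebraMap_of_mem_domainHull {R : Type u} [CommRing R] [IsDomain R]
    {x : FractionRing R} (hx : x ∈ domainHull R) {p : PrimeSpectrum R}
    (hp : Order.height p = 1) :
    ∃ r, ∃ s ∉ p.asIdeal, algebraMap R _ s * x = algebraMap R _ r := by
  obtain ⟨r, s, hs, rfl⟩ : x ∈ Localization.subalgebra (FractionRing R) p.asIdeal.primeCompl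
      p.asIdeal.primeCompl_le_nonZeroDivisors :=
    (Submodule.mem_iInf _).mp ((Submodule.mem_iInf _).mp hx p) hp
  exact ⟨r, s, hs, by rw [mul_comm, IsLocalization.mk'_spec]⟩

theorem domainHull_le_of_forall_height_comap_eq_one {R : Type u} [CommRing R] [IsDomain R]
    (A : Subalgebra R (FractionRing R)) [IsNoetherianRing A] [IsIntegrallyClosed A]
    (hht : ∀ P : PrimeSpectrum A, Order.height P = 1 →
      Order.height (PrimeSpectrum.comap (algebraMap R A) P) = 1) :
    domainHull R ≤ Subalgebra.toSubmodule A := by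
  intro x hx
  by_contra hxA
  obtain ⟨⟨a, b⟩, hab : x * algebraMap R _ b = algebraMap R _ a⟩ :=
    IsLocalization.surj (nonZeroDivisors R) x
  have hcoe (r : R) : ((algebraMap R A r : A) : FractionRing R) = algebraMap R _ r := rfl
  have hbK : algebraMap R (FractionRing R) b ≠ 0 :=
    IsFractionRing.to_map_ne_zero_of_mem_nonZeroDivisors b.2
  have hb : algebraMap R A b ≠ 0 := fun h ↦ hbK (by rw [← hcoe, h, ZeroMemClass.coe_zero])
  have ha : algebraMap R A a ∉ Ideal.span {algebraMap R A b} := by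
    intro h
    obtain ⟨w, hw⟩ := Ideal.mem_span_singleton'.mp h
    have hxw : x = w := mul_right_cancel₀ hbK <| by
      rw [hab, ← hcoe, ← hcoe, ← hw, Subalgebra.coe_mul]
    exact hxA (hxw ▸ w.2)
  obtain ⟨P, hP, hP1, hPmem⟩ := exists_isPrime_height_eq_one_of_notMem_span_singleton hb ha
  obtain ⟨r, s, hs, hsr⟩ := exists_mul_eq_algebraMap_of_mem_domainHull hx
    (hht ⟨P, hP⟩ (by rwa [← PrimeSpectrum.height_eq_orderHeight]))
  refine hs <| hPmem _ <| Ideal.mem_span_singleton'.mpr ⟨algebraMap R A r, Subtype.ext ?_⟩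
  simp only [Subalgebra.coe_mul, hcoe, ← hsr, ← hab]
  ring

/-- Let `R` be a Noetherian domain whose integral closure `R'` in its fraction field `K` is a
finite `R`-module, and assume that for every height-1 prime `P'` of `R'` the contraction
`P' ∩ R` has height 1 in `R`.  Then the hull `⋂_p R_p ⊆ K` (intersection over all height-1
primes of `R`) is a finite `R`-module. -/
theorem domain_hull_finite_of_finite_integral_closure
    (R : Type u) [CommRing R] [IsDomain R] [IsNoetherianRing R]
    (hfin : Module.Finite R (integralClosure R (FractionRing R)))
    (hht : ∀ P' : PrimeSpectrum (integralClosure R (FractionRing R)),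
      Order.height P' = 1 →
        Order.height
          (PrimeSpectrum.comap (algebraMap R (integralClosure R (FractionRing R))) P') = 1) :
    Module.Finite R (domainHull R) := by
  have : IsNoetherianRing (integralClosure R (FractionRing R)) :=
    Algebra.FiniteType.isNoetherianRing R _
  have : IsIntegrallyClosed (integralClosure R (FractionRing R)) :=
    integralClosure.isIntegrallyClosedOfFiniteExtension (FractionRing R)
  exact Module.Finite.iff_fg.mpr
    (Submodule.FG.of_le_of_isNoetherian (domainHull_le_of_forall_height_comap_eq_one _ hht))
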